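/- With Ω, T, p, q as above, for every input x: Σ_{t=1}^{T} A_t(x) ≤ Σ_{t=1}^{T} (1 + 2(T − t)) · E_t(x), where A_t(x) = E_{y∼p_{≤T}(·|x)}[ 1{t ≤ |y|} · D_TVD(p(·|x,y_{<t}), q(·|x,y_{<t})) ] and E_t(x) = E_{y∼q_{≤T}(·|x)}[ 1{t ≤ |y|} · D_TVD(p(·|x,y_{<t}), q(·|x,y_{<t})) ]. -/

import Mathlib

open Finset

/-- Total variation distance between two distributions on a finite set. -/
noncomputable def tvd {Ω : Type*} [Fintype Ω] (P Q : Ω → ℝ) : ℝ :=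
  (1 / 2) * ∑ c, |P c - Q c|

/-- `IsDist P`: `P` is a probability distribution on the finite set `Ω`. -/
def IsDist {Ω : Type*} [Fintype Ω] (P : Ω → ℝ) : Prop :=
  (∀ c, 0 ≤ P c) ∧ ∑ c, P c = 1

/-- A next-token model: for every input `x` and every prefix, a next-token distribution. -/
def IsModel {Ω ι : Type*} [Fintype Ω] (p : ι → List Ω → Ω → ℝ) : Prop :=
  ∀ x pre, IsDist (p x pre)

/-- `Stopped eos T y`: `y` is a completed output sequence for horizon `T`: it is nonempty,
has length at most `T`, contains the end-of-sequence token at no position except possibly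
the last one, and either ends with `eos` or has length exactly `T`. -/
def Stopped {Ω : Type*} [DecidableEq Ω] (eos : Ω) (T : ℕ) (y : List Ω) : Prop :=
  y ≠ [] ∧ y.length ≤ T ∧ eos ∉ y.dropLast ∧ (y.getLast? = some eos ∨ y.length = T)

open Classical in
/-- Probability that autoregressive sampling — where the next-token distribution used to
sample the `(t+1)`-st token given the length-`t` prefix `pre` is `ms t pre`, with horizon `T`
and end-of-sequence token `eos` — outputs exactly the sequence `y`. -/
noncomputable def seqProb {Ω : Type*} [Fintype Ω] [DecidableEq Ω] (eos : Ω)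
    (ms : ℕ → List Ω → Ω → ℝ) (T : ℕ) (y : List Ω) : ℝ :=
  if Stopped eos T y then ∏ t ∈ Finset.range y.length, ms t (y.take t) (y.getD t eos) else 0

/-- Expectation of `f` under the induced distribution over output sequences. -/
noncomputable def seqExp {Ω : Type*} [Fintype Ω] [DecidableEq Ω] (eos : Ω)
    (ms : ℕ → List Ω → Ω → ℝ) (T : ℕ) (f : List Ω → ℝ) : ℝ :=
  ∑ n ∈ Finset.Icc 1 T, ∑ v : Fin n → Ω, seqProb eos ms T (List.ofFn v) * f (List.ofFn v)

/-- Expectation under `p_{≤T}(·|x)`, the output-sequence distribution of the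
autoregressive model with next-token distributions `p`. -/
noncomputable def modelExp {Ω ι : Type*} [Fintype Ω] [DecidableEq Ω] (eos : Ω)
    (p : ι → List Ω → Ω → ℝ) (x : ι) (T : ℕ) (f : List Ω → ℝ) : ℝ :=
  seqExp eos (fun _ pre => p x pre) T f

/-- Expectation under the mixed-model sequence distribution `M(x, ∅, z)`, where the letter
`z_t` (`true` = letter `P`, i.e. target model `p`; `false` = letter `Q`, i.e. draft model `q`)
selects the model used to sample the `t`-th token, with horizon `|z|` and empty prefix. -/
noncomputable def mixExp {Ω ι : Type*} [Fintype Ω] [DecidableEq Ω] (eos : Ω)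
    (p q : ι → List Ω → Ω → ℝ) (x : ι) (z : List Bool) (f : List Ω → ℝ) : ℝ :=
  seqExp eos (fun t pre => if z.getD t true then p x pre else q x pre) z.length f

/-- `Σ_{t=1}^{|y|} D_TVD(p(·|x, y_{<t}), q(·|x, y_{<t}))`. -/
noncomputable def totalLoss {Ω ι : Type*} [Fintype Ω] (p q : ι → List Ω → Ω → ℝ)
    (x : ι) (y : List Ω) : ℝ :=
  ∑ t ∈ Finset.range y.length, tvd (p x (y.take t)) (q x (y.take t))

/-- `1{t ≤ |y|} · D_TVD(p(·|x, y_{<t}), q(·|x, y_{<t}))` for a (1-indexed) position `t`. -/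
noncomputable def stepLoss {Ω ι : Type*} [Fintype Ω] (p q : ι → List Ω → Ω → ℝ)
    (x : ι) (t : ℕ) (y : List Ω) : ℝ :=
  if t ≤ y.length then tvd (p x (y.take (t - 1))) (q x (y.take (t - 1))) else 0

/-- Expected output length `L_p(x) = E_{y∼p_{≤T}(·|x)}[|y|]` of the target model. -/
noncomputable def Lp {Ω ι : Type*} [Fintype Ω] [DecidableEq Ω] (eos : Ω)
    (p : ι → List Ω → Ω → ℝ) (x : ι) (T : ℕ) : ℝ :=
  modelExp eos p x T (fun y => (y.length : ℝ))

/-- Sequence-level acceptance rate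
`α(x) = 1 − E_{y∼p_{≤T}(·|x)}[Σ_{t=1}^{|y|} D_TVD(p(·|x,y_{<t}), q(·|x,y_{<t}))] / L_p(x)`. -/
noncomputable def acceptRate {Ω ι : Type*} [Fintype Ω] [DecidableEq Ω] (eos : Ω)
    (p q : ι → List Ω → Ω → ℝ) (x : ι) (T : ℕ) : ℝ :=
  1 - modelExp eos p x T (totalLoss p q x) / Lp eos p x T

/-- On-policy distillation loss
`ε(x) = E_{y∼q_{≤T}(·|x)}[(1/|y|) Σ_{t=1}^{|y|} D_TVD(p(·|x,y_{<t}), q(·|x,y_{<t}))]`. -/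
noncomputable def onPolicyLoss {Ω ι : Type*} [Fintype Ω] [DecidableEq Ω] (eos : Ω)
    (p q : ι → List Ω → Ω → ℝ) (x : ι) (T : ℕ) : ℝ :=
  modelExp eos q x T (fun y => (1 / (y.length : ℝ)) * totalLoss p q x y)

/-- `A_t(x) = E_{y∼p_{≤T}(·|x)}[1{t ≤ |y|} · D_TVD(p(·|x,y_{<t}), q(·|x,y_{<t}))]`. -/
noncomputable def Aterm {Ω ι : Type*} [Fintype Ω] [DecidableEq Ω] (eos : Ω)
    (p q : ι → List Ω → Ω → ℝ) (x : ι) (T t : ℕ) : ℝ :=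
  modelExp eos p x T (stepLoss p q x t)

/-- `E_t(x) = E_{y∼q_{≤T}(·|x)}[1{t ≤ |y|} · D_TVD(p(·|x,y_{<t}), q(·|x,y_{<t}))]`. -/
noncomputable def Eterm {Ω ι : Type*} [Fintype Ω] [DecidableEq Ω] (eos : Ω)
    (p q : ι → List Ω → Ω → ℝ) (x : ι) (T t : ℕ) : ℝ :=
  modelExp eos q x T (stepLoss p q x t)

/-!
Both sequence expectations satisfy the recursion over the first token (`completionExp`).
Comparing the `p`- and `q`-recursions at a prefix, switching the first token's distribution
from `p` to `q` costs at most `∑ c, |p c - q c| = 2 D_TVD`, because the step loss is bounded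
by `1`; the rest is handled by induction under `q`. The `t`-th step loss is fixed once `t - 1`
tokens are known, so the recursion stops there and `A_t ≤ E_t + 2 ∑_{k<t} E_k`. Summing over
`t` and exchanging the sums gives the weights `1 + 2 (T - t)`.
-/

section Distributions

variable {Ω : Type*} [Fintype Ω]

theorem tvd_nonneg (P Q : Ω → ℝ) : 0 ≤ tvd P Q := by
  unfold tvd; positivity

theorem tvd_le_one {P Q : Ω → ℝ} (hP : IsDist P) (hQ : IsDist Q) : tvd P Q ≤ 1 := by
  have h : ∑ c, |P c - Q c| ≤ ∑ c, (P c + Q c) :=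
    sum_le_sum fun c _ => abs_sub_le_iff.2 ⟨by linarith [hQ.1 c], by linarith [hP.1 c]⟩
  rw [sum_add_distrib, hP.2, hQ.2] at h
  unfold tvd
  linarith

theorem sum_sub_mul_le_two_mul_tvd (P Q h : Ω → ℝ) (hh : ∀ c, |h c| ≤ 1) :
    ∑ c, (P c - Q c) * h c ≤ 2 * tvd P Q := by
  calc ∑ c, (P c - Q c) * h c ≤ ∑ c, |P c - Q c| :=
        sum_le_sum fun c _ => (le_abs_self _).trans <| by
          rw [abs_mul]; exact mul_le_of_le_one_right (abs_nonneg _) (hh c)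
    _ = 2 * tvd P Q := by unfold tvd; ring

theorem IsDist.abs_sum_mul_le {P h : Ω → ℝ} (hP : IsDist P) {B : ℝ} (hh : ∀ c, |h c| ≤ B) :
    |∑ c, P c * h c| ≤ B := by
  calc |∑ c, P c * h c| ≤ ∑ c, P c * B :=
        (abs_sum_le_sum_abs _ _).trans <| sum_le_sum fun c _ => by
          rw [abs_mul, abs_of_nonneg (hP.1 c)]; exact mul_le_mul_of_nonneg_left (hh c) (hP.1 c)
    _ = B := by rw [← sum_mul, hP.2, one_mul]

theorem abs_stepLoss_le_one {ι : Type*} {p q : ι → List Ω → Ω → ℝ} (hp : IsModel p)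
    (hq : IsModel q) (x : ι) (t : ℕ) (y : List Ω) : |stepLoss p q x t y| ≤ 1 := by
  unfold stepLoss
  split_ifs
  · rw [abs_of_nonneg (tvd_nonneg _ _)]
    exact tvd_le_one (hp x _) (hq x _)
  · simp

end Distributions

section Completions

variable {Ω : Type*} [Fintype Ω] [DecidableEq Ω] (eos : Ω)

/-- The expectation of `f` over the completions of `pre` sampled from the next-token
distributions `μ`, stopping at `eos` or after `n` further tokens. -/
noncomputable def completionExp (μ : List Ω → Ω → ℝ) : ℕ → List Ω → (List Ω → ℝ) → ℝ
  | 0, pre, f => f pre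
  | n + 1, pre, f => ∑ c, μ pre c *
      if c = eos then f (pre ++ [c]) else completionExp μ n (pre ++ [c]) f

variable {eos}

theorem completionExp_congr (μ : List Ω → Ω → ℝ) {f g : List Ω → ℝ} (n : ℕ) (pre : List Ω)
    (hfg : ∀ s ≠ [], f (pre ++ s) = g (pre ++ s)) :
    completionExp eos μ (n + 1) pre f = completionExp eos μ (n + 1) pre g := by
  induction n generalizing pre with
  | zero => simp only [completionExp, hfg [_] (List.cons_ne_nil _ _), ite_self]
  | succ n ih =>
    refine sum_congr rfl fun c _ => ?_
    rw [hfg [c] (List.cons_ne_nil _ _),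
      ih (pre ++ [c]) fun s _ => by simpa using hfg (c :: s) (List.cons_ne_nil _ _)]

theorem completionExp_const {μ : List Ω → Ω → ℝ} (hμ : ∀ pre, IsDist (μ pre)) (a : ℝ)
    (n : ℕ) (pre : List Ω) : completionExp eos μ n pre (fun _ => a) = a := by
  induction n generalizing pre with
  | zero => rfl
  | succ n ih => simp only [completionExp, ih, ite_self, ← sum_mul, (hμ pre).2, one_mul]

theorem abs_completionExp_le {μ : List Ω → Ω → ℝ} (hμ : ∀ pre, IsDist (μ pre))
    {f : List Ω → ℝ} {B : ℝ} (hf : ∀ y, |f y| ≤ B) (n : ℕ) (pre : List Ω) :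
    |completionExp eos μ n pre f| ≤ B := by
  induction n generalizing pre with
  | zero => exact hf pre
  | succ n ih => exact (hμ pre).abs_sum_mul_le fun c => by split_ifs <;> simp [hf, ih]

variable {ι : Type*} {p q : ι → List Ω → Ω → ℝ} (x : ι)

theorem completionExp_stepLoss_of_le {μ : List Ω → Ω → ℝ} (hμ : ∀ pre, IsDist (μ pre))
    {t n : ℕ} {pre : List Ω} (h₁ : t - 1 ≤ pre.length) (h₂ : t ≤ pre.length + n) :
    completionExp eos μ n pre (stepLoss p q x t) =
      tvd (p x (pre.take (t - 1))) (q x (pre.take (t - 1))) := by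
  have hloss : ∀ s, t ≤ (pre ++ s).length →
      stepLoss p q x t (pre ++ s) = tvd (p x (pre.take (t - 1))) (q x (pre.take (t - 1))) := by
    intro s hs
    rw [stepLoss, if_pos hs, List.take_append_of_le_length h₁]
  cases n with
  | zero => simpa [completionExp] using hloss [] (by simpa using h₂)
  | succ n =>
    rw [completionExp_congr μ (g := fun _ => _) n pre fun s hs => hloss s ?_,
      completionExp_const hμ]
    simp only [List.length_append]
    have := List.length_pos_iff.2 hs
    omega

theorem completionExp_succ_stepLoss_of_lt (μ : List Ω → Ω → ℝ) {k n : ℕ} {pre : List Ω}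
    (hk : pre.length + 1 < k) :
    completionExp eos μ (n + 1) pre (stepLoss p q x k) =
      ∑ c, μ pre c *
        if c = eos then 0 else completionExp eos μ n (pre ++ [c]) (stepLoss p q x k) := by
  refine sum_congr rfl fun c _ => ?_
  split_ifs
  · rw [stepLoss, if_neg (by simp; omega)]
  · rfl

theorem sum_completionExp_stepLoss_succ (hq : IsModel q) {m n : ℕ} {pre : List Ω}
    (hm : pre.length < m) :
    ∑ k ∈ Icc (pre.length + 1) m, completionExp eos (q x) (n + 1) pre (stepLoss p q x k) =
      tvd (p x pre) (q x pre) + ∑ c, q x pre c * if c = eos then 0 else ∑ k ∈ Icc (pre.length + 2) m,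
        completionExp eos (q x) n (pre ++ [c]) (stepLoss p q x k) := by
  rw [← insert_Icc_add_one_left_eq_Icc (by omega), sum_insert (by simp),
    completionExp_stepLoss_of_le x (hq x) (by omega) (by omega), Nat.add_sub_cancel,
    List.take_length]
  congr 1
  rw [sum_congr rfl fun k hk => completionExp_succ_stepLoss_of_lt x (q x) (by simp at hk; omega),
    sum_comm]
  refine sum_congr rfl fun c _ => ?_
  split_ifs <;> simp [mul_sum, add_assoc]

theorem completionExp_stepLoss_sub_le (hp : IsModel p) (hq : IsModel q) (t n : ℕ)
    (pre : List Ω) (ht : t ≤ pre.length + n) :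
    completionExp eos (p x) n pre (stepLoss p q x t) -
        completionExp eos (q x) n pre (stepLoss p q x t) ≤
      2 * ∑ k ∈ Icc (pre.length + 1) (t - 1), completionExp eos (q x) n pre (stepLoss p q x k) := by
  induction n generalizing pre with
  | zero =>
    rw [completionExp_stepLoss_of_le x (hp x) (by omega) ht,
      completionExp_stepLoss_of_le x (hq x) (by omega) ht, Icc_eq_empty (by omega)]
    simp
  | succ n ih =>
    obtain h | h := le_or_gt (t - 1) pre.length
    · rw [completionExp_stepLoss_of_le x (hp x) h ht, completionExp_stepLoss_of_le x (hq x) h ht,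
        Icc_eq_empty (by omega)]
      simp
    set g := stepLoss p q x t
    let gP : Ω → ℝ := fun c =>
      if c = eos then g (pre ++ [c]) else completionExp eos (p x) n (pre ++ [c]) g
    let gQ : Ω → ℝ := fun c =>
      if c = eos then g (pre ++ [c]) else completionExp eos (q x) n (pre ++ [c]) g
    have hgP : ∀ c, |gP c| ≤ 1 := fun c => by
      dsimp only [gP]
      split_ifs
      · exact abs_stepLoss_le_one hp hq x t _
      · exact abs_completionExp_le (hp x) (abs_stepLoss_le_one hp hq x t) n _
    have hgPQ : ∀ c, gP c - gQ c ≤ if c = eos then 0 else 2 * ∑ k ∈ Icc (pre.length + 2) (t - 1),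
        completionExp eos (q x) n (pre ++ [c]) (stepLoss p q x k) := fun c => by
      dsimp only [gP, gQ]
      split_ifs
      · simp
      · simpa [add_assoc] using ih (pre ++ [c]) (by simp; omega)
    calc completionExp eos (p x) (n + 1) pre g - completionExp eos (q x) (n + 1) pre g
        = ∑ c, (p x pre c - q x pre c) * gP c + ∑ c, q x pre c * (gP c - gQ c) := by
          simp only [completionExp, ← sum_sub_distrib, ← sum_add_distrib]
          exact sum_congr rfl fun c _ => by ring
      _ ≤ 2 * tvd (p x pre) (q x pre) + ∑ c, q x pre c * if c = eos then 0 else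
            2 * ∑ k ∈ Icc (pre.length + 2) (t - 1),
              completionExp eos (q x) n (pre ++ [c]) (stepLoss p q x k) :=
          add_le_add (sum_sub_mul_le_two_mul_tvd _ _ _ hgP)
            (sum_le_sum fun c _ => mul_le_mul_of_nonneg_left (hgPQ c) ((hq x pre).1 c))
      _ = _ := by
          rw [sum_completionExp_stepLoss_succ x hq h, mul_add, mul_sum]
          congr 1
          refine sum_congr rfl fun c _ => ?_
          split_ifs <;> ring

end Completions

section Sequences

theorem sum_Icc_one_eq_sum_range {M : Type*} [AddCommMonoid M] (G : ℕ → M) (n : ℕ) :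
    ∑ j ∈ Icc 1 n, G j = ∑ j ∈ range n, G (j + 1) := by
  induction n with
  | zero => rfl
  | succ n ih => rw [sum_Icc_succ_top (by omega), ih, sum_range_succ]

variable {Ω : Type*}

def pathProb (μ : List Ω → Ω → ℝ) : List Ω → List Ω → ℝ
  | _, [] => 1
  | pre, c :: y => μ pre c * pathProb μ (pre ++ [c]) y

theorem prod_range_eq_pathProb (μ : List Ω → Ω → ℝ) (d : Ω) (pre y : List Ω) :
    ∏ i ∈ range y.length, μ (pre ++ y.take i) (y.getD i d) = pathProb μ pre y := by
  induction y generalizing pre with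
  | nil => rfl
  | cons c y ih =>
    rw [List.length_cons, prod_range_succ', pathProb, ← ih (pre ++ [c])]
    simp [mul_comm]

theorem sum_ofFn_succ [Fintype Ω] {β : Type*} [AddCommMonoid β] (F : List Ω → β) (n : ℕ) :
    ∑ v : Fin (n + 1) → Ω, F (List.ofFn v) = ∑ c, ∑ v : Fin n → Ω, F (c :: List.ofFn v) := by
  rw [← (Fin.consEquiv fun _ => Ω).sum_comp, Fintype.sum_prod_type]
  simp [Fin.consEquiv, List.ofFn_succ]

variable [DecidableEq Ω] {eos : Ω}

theorem stopped_singleton_iff {n : ℕ} {c : Ω} : Stopped eos (n + 1) [c] ↔ c = eos ∨ n = 0 := by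
  simp [Stopped, eq_comm]

theorem stopped_cons_iff {n : ℕ} {c : Ω} {y : List Ω} (hy : y ≠ []) :
    Stopped eos (n + 1) (c :: y) ↔ c ≠ eos ∧ Stopped eos n y := by
  obtain ⟨a, y, rfl⟩ := List.exists_cons_of_ne_nil hy
  simp only [Stopped, List.dropLast_cons_cons, List.getLast?_cons_cons, List.mem_cons,
    List.length_cons, ne_eq, reduceCtorEq, not_false_eq_true, true_and, not_or,
    Nat.add_le_add_iff_right, Nat.add_right_cancel_iff, eq_comm (a := eos)]
  tauto

variable (eos) in
open Classical in
noncomputable def weightedPath (μ : List Ω → Ω → ℝ) (n : ℕ) (pre : List Ω) (f : List Ω → ℝ)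
    (y : List Ω) : ℝ :=
  (if Stopped eos n y then pathProb μ pre y else 0) * f (pre ++ y)

theorem weightedPath_singleton (μ : List Ω → Ω → ℝ) (n : ℕ) (pre : List Ω) (f : List Ω → ℝ)
    (c : Ω) : weightedPath eos μ (n + 1) pre f [c] =
      μ pre c * if c = eos ∨ n = 0 then f (pre ++ [c]) else 0 := by
  simp only [weightedPath, stopped_singleton_iff, pathProb, mul_one]
  split_ifs <;> simp

theorem weightedPath_cons (μ : List Ω → Ω → ℝ) (n : ℕ) (pre : List Ω) (f : List Ω → ℝ)
    (c : Ω) {y : List Ω} (hy : y ≠ []) : weightedPath eos μ (n + 1) pre f (c :: y) =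
      if c = eos then 0 else μ pre c * weightedPath eos μ n (pre ++ [c]) f y := by
  have h := stopped_cons_iff (eos := eos) (n := n) (c := c) hy
  rw [weightedPath, weightedPath]
  split_ifs <;> simp_all [pathProb, mul_assoc]

variable [Fintype Ω]

variable (eos) in
/-- The flat expectation of `seqExp`, taken over the completions of a prefix `pre`. -/
noncomputable def seqExpFrom (μ : List Ω → Ω → ℝ) (n : ℕ) (pre : List Ω) (f : List Ω → ℝ) : ℝ :=
  ∑ j ∈ range n, ∑ v : Fin (j + 1) → Ω, weightedPath eos μ n pre f (List.ofFn v)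

theorem seqExp_eq_seqExpFrom (μ : List Ω → Ω → ℝ) (T : ℕ) (f : List Ω → ℝ) :
    seqExp eos (fun _ => μ) T f = seqExpFrom eos μ T [] f := by
  rw [seqExp, seqExpFrom, sum_Icc_one_eq_sum_range]
  refine sum_congr rfl fun j _ => sum_congr rfl fun v _ => ?_
  rw [seqProb, weightedPath, ← prod_range_eq_pathProb μ eos []]
  simp

theorem seqExpFrom_succ (μ : List Ω → Ω → ℝ) (n : ℕ) (pre : List Ω) (f : List Ω → ℝ) :
    seqExpFrom eos μ (n + 1) pre f = ∑ c, μ pre c *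
      ((if c = eos ∨ n = 0 then f (pre ++ [c]) else 0) +
        if c = eos then 0 else seqExpFrom eos μ n (pre ++ [c]) f) := by
  rw [seqExpFrom, sum_range_succ', sum_ofFn_succ]
  simp only [sum_ofFn_succ, Fintype.sum_unique, List.ofFn_zero, weightedPath_singleton,
    weightedPath_cons _ _ _ _ _ (mt List.ofFn_eq_nil_iff.1 (Nat.succ_ne_zero _))]
  rw [sum_comm, ← sum_add_distrib]
  simp only [seqExpFrom]
  refine sum_congr rfl fun c _ => ?_
  split_ifs <;> simp [mul_sum, mul_add, add_comm]

theorem seqExpFrom_eq_completionExp (μ : List Ω → Ω → ℝ) (n : ℕ) (pre : List Ω)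
    (f : List Ω → ℝ) : seqExpFrom eos μ (n + 1) pre f = completionExp eos μ (n + 1) pre f := by
  induction n generalizing pre with
  | zero =>
    rw [seqExpFrom_succ]
    simp [completionExp, seqExpFrom]
  | succ n ih =>
    rw [seqExpFrom_succ, completionExp]
    refine sum_congr rfl fun c _ => ?_
    split_ifs <;> simp_all

theorem modelExp_eq_completionExp {ι : Type*} (p : ι → List Ω → Ω → ℝ) (x : ι) {T : ℕ}
    (hT : 1 ≤ T) (f : List Ω → ℝ) : modelExp eos p x T f = completionExp eos (p x) T [] f := by
  obtain ⟨n, rfl⟩ := Nat.exists_eq_add_of_le' hT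
  exact (seqExp_eq_seqExpFrom (p x) _ f).trans (seqExpFrom_eq_completionExp _ n [] f)

end Sequences

theorem Aterm_le_Eterm_add_two_mul_sum {Ω ι : Type*} [Fintype Ω] [DecidableEq Ω] (eos : Ω)
    {p q : ι → List Ω → Ω → ℝ} (hp : IsModel p) (hq : IsModel q) (x : ι) {T t : ℕ}
    (hT : 1 ≤ T) (ht : t ≤ T) :
    Aterm eos p q x T t ≤ Eterm eos p q x T t + 2 * ∑ k ∈ Icc 1 (t - 1), Eterm eos p q x T k := by
  have hybrid := completionExp_stepLoss_sub_le (eos := eos) x hp hq t T [] (by simpa using ht)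
  simp only [Aterm, Eterm, modelExp_eq_completionExp _ x hT]
  simp only [List.length_nil, zero_add] at hybrid
  linarith

theorem sum_Icc_sum_Icc_sub_one (e : ℕ → ℝ) (T : ℕ) :
    ∑ t ∈ Icc 1 T, ∑ k ∈ Icc 1 (t - 1), e k = ∑ k ∈ Icc 1 T, ((T : ℝ) - k) * e k := by
  induction T with
  | zero => rfl
  | succ T ih =>
    rw [sum_Icc_succ_top (by omega), sum_Icc_succ_top (by omega), ih, Nat.add_sub_cancel]
    simp [add_sub_right_comm, add_mul, sum_add_distrib]

theorem sum_Aterm_le_weighted_sum_Eterm_general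
    {Ω ι : Type*} [Fintype Ω] [DecidableEq Ω] (eos : Ω)
    (T : ℕ)
    (p q : ι → List Ω → Ω → ℝ) (hp : IsModel p) (hq : IsModel q) (x : ι) :
    ∑ t ∈ Finset.Icc 1 T, Aterm eos p q x T t ≤
      ∑ t ∈ Finset.Icc 1 T, (1 + 2 * ((T : ℝ) - (t : ℝ))) * Eterm eos p q x T t := by
  calc ∑ t ∈ Icc 1 T, Aterm eos p q x T t
      ≤ ∑ t ∈ Icc 1 T, (Eterm eos p q x T t + 2 * ∑ k ∈ Icc 1 (t - 1), Eterm eos p q x T k) :=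
        sum_le_sum fun t ht => Aterm_le_Eterm_add_two_mul_sum eos hp hq x
          ((mem_Icc.1 ht).1.trans (mem_Icc.1 ht).2) (mem_Icc.1 ht).2
    _ = _ := by
        rw [sum_add_distrib, ← mul_sum, sum_Icc_sum_Icc_sub_one, mul_sum, ← sum_add_distrib]
        exact sum_congr rfl fun t _ => by ring

/-- **DistillSpec, summed bound.**
`Σ_{t=1}^{T} A_t(x) ≤ Σ_{t=1}^{T} (1 + 2(T − t)) · E_t(x)`. -/
theorem sum_Aterm_le_weighted_sum_Eterm
    {Ω ι : Type*} [Fintype Ω] [DecidableEq Ω] (eos : Ω)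
    (T : ℕ) (hT : 1 ≤ T)
    (p q : ι → List Ω → Ω → ℝ) (hp : IsModel p) (hq : IsModel q) (x : ι) :
    ∑ t ∈ Finset.Icc 1 T, Aterm eos p q x T t ≤
      ∑ t ∈ Finset.Icc 1 T, (1 + 2 * ((T : ℝ) - (t : ℝ))) * Eterm eos p q x T t :=
  sum_Aterm_le_weighted_sum_Eterm_general eos T p q hp hq x
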